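/- (Monotonicity of weakest edges) Let 𝓜 be a finite indexed family of machines over T with d_min(𝓜) = d, and let F be a machine over T that separates every pair of distinct states t ≠ t' with d_𝓜(t,t') = d. Then d_min(𝓜 ⊕ F) = d + 1, and every pair of distinct states t ≠ t' with d_𝓜(t,t') = d satisfies d_{𝓜 ⊕ F}(t,t') = d + 1 = d_min(𝓜 ⊕ F); that is, every minimum-distance pair of 𝓜 is still a minimum-distance pair after F is added, so the set of weakest edges only grows as such machines are added. -/

import Mathlib

open scoped Classical

/-- A machine over `T` (a closed partition of `T`): an equivalence relation on `T`
that is preserved by the transition function `δ`. -/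
structure Machine (T : Type*) (E : Type*) (δ : T → E → T) where
  rel : T → T → Prop
  equiv : Equivalence rel
  closed : ∀ x y : T, rel x y → ∀ e : E, rel (δ x e) (δ y e)

/-- The distance `d_𝓜(t,t')`: the number of machines in the family `M` that
separate `t` and `t'`. -/
noncomputable def fdist {T E ι : Type*} {δ : T → E → T} [Fintype ι]
    (M : ι → Machine T E δ) (t t' : T) : ℕ :=
  (Finset.univ.filter fun i => ¬ (M i).rel t t').card

/-- The minimum distance `d_min(𝓜)`: the minimum of `fdist M t t'` over all pairs
of distinct states `t ≠ t'`. -/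
noncomputable def dmin {T E ι : Type*} {δ : T → E → T} [Fintype ι]
    (M : ι → Machine T E δ) : ℕ :=
  sInf {d : ℕ | ∃ t t' : T, t ≠ t' ∧ d = fdist M t t'}

/-! Adding `F` adds at most one to every distance, and exactly one to the pairs at distance `d`,
which `F` separates. Every other pair of distinct states was already at distance at least
`d + 1`, so the minimum of the extended family is `d + 1`, attained by the old weakest edges. -/

section

variable {T E ι κ : Type*} {δ : T → E → T} [Fintype ι]

lemma fdist_sumElim [Fintype κ] (M : ι → Machine T E δ) (N : κ → Machine T E δ) (t t' : T) :
    fdist (Sum.elim M N) t t' = fdist M t t' + fdist N t t' := by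
  simp only [fdist, Finset.card_filter, Fintype.sum_sum_type, Sum.elim_inl, Sum.elim_inr]
  rfl

lemma fdist_const_unit (F : Machine T E δ) (t t' : T) :
    fdist (fun _ : Unit => F) t t' = if F.rel t t' then 0 else 1 := by
  by_cases h : F.rel t t' <;> simp [fdist, h]

lemma dmin_le_fdist (M : ι → Machine T E δ) {t t' : T} (h : t ≠ t') :
    dmin M ≤ fdist M t t' :=
  Nat.sInf_le ⟨t, t', h, rfl⟩

lemma exists_fdist_eq_dmin [Nontrivial T] (M : ι → Machine T E δ) :
    ∃ t t', t ≠ t' ∧ fdist M t t' = dmin M := by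
  obtain ⟨a, b, hab⟩ := exists_pair_ne T
  obtain ⟨t, t', h, heq⟩ := Nat.sInf_mem (s := {d | ∃ t t' : T, t ≠ t' ∧ d = fdist M t t'})
    ⟨_, a, b, hab, rfl⟩
  exact ⟨t, t', h, heq.symm⟩

lemma le_dmin [Nontrivial T] (M : ι → Machine T E δ) {n : ℕ}
    (h : ∀ t t', t ≠ t' → n ≤ fdist M t t') : n ≤ dmin M := by
  obtain ⟨a, b, hab⟩ := exists_pair_ne T
  refine le_csInf ⟨_, a, b, hab, rfl⟩ ?_
  rintro _ ⟨t, t', htt', rfl⟩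
  exact h t t' htt'

end

theorem weakest_edges_monotone_general {T E ι : Type*} [Nontrivial T] [Fintype ι]
    {δ : T → E → T} (M : ι → Machine T E δ) (F : Machine T E δ) (d : ℕ)
    (hd : dmin M = d)
    (hcov : ∀ t t' : T, t ≠ t' → fdist M t t' = d → ¬ F.rel t t') :
    dmin (Sum.elim M (fun _ : Unit => F)) = d + 1 ∧
      ∀ t t' : T, t ≠ t' → fdist M t t' = d →
        fdist (Sum.elim M (fun _ : Unit => F)) t t' = d + 1 := by
  subst hd
  have hdist : ∀ t t', fdist (Sum.elim M (fun _ : Unit => F)) t t' =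
      fdist M t t' + if F.rel t t' then 0 else 1 := fun t t' => by
    rw [fdist_sumElim, fdist_const_unit]
  have hweak : ∀ t t', t ≠ t' → fdist M t t' = dmin M →
      fdist (Sum.elim M (fun _ : Unit => F)) t t' = dmin M + 1 := fun t t' h h' => by
    rw [hdist, h', if_neg (hcov t t' h h')]
  refine ⟨le_antisymm ?_ (le_dmin _ fun t t' h => ?_), hweak⟩
  · obtain ⟨u, v, huv, hmin⟩ := exists_fdist_eq_dmin M
    exact hweak u v huv hmin ▸ dmin_le_fdist _ huv
  · rcases (dmin_le_fdist M h).eq_or_lt with hmin | hlt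
    · exact (hweak t t' h hmin.symm).ge
    · rw [hdist]
      omega

/-- Monotonicity of weakest edges: adding a machine `F` that separates
every minimum-distance pair of `𝓜` raises the minimum distance from `d` to `d + 1`,
and every minimum-distance pair of `𝓜` is still a minimum-distance pair of `𝓜 ⊕ F`. -/
theorem weakest_edges_monotone {T E ι : Type*} [Fintype T] [Nontrivial T] [Fintype ι]
    {δ : T → E → T} (M : ι → Machine T E δ) (F : Machine T E δ) (d : ℕ)
    (hd : dmin M = d)
    (hcov : ∀ t t' : T, t ≠ t' → fdist M t t' = d → ¬ F.rel t t') :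
    dmin (Sum.elim M (fun _ : Unit => F)) = d + 1 ∧
      ∀ t t' : T, t ≠ t' → fdist M t t' = d →
        fdist (Sum.elim M (fun _ : Unit => F)) t t' = d + 1 :=
  weakest_edges_monotone_general M F d hd hcov
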